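/- arXiv:2009.13128 — 2 statements merged into one kernel-verified Lean document; each statement's English description precedes it below -/
import Mathlib

section
/- For every multivariate polynomial f ∈ ℚ[X] over a finite parameter set X, there exist a simple pMC D over X whose only cycles are self-loops at absorbing states and a target set T such that for every valuation val : X → [0,1]: Pr_{D[val]}(◇T) ≤ 1/2 if and only if f(val) ≤ 0. -/
/-- A finite path in state space `S`: a length `m` together with `m + 1` states. -/
abbrev MCPath (S : Type) : Type := Σ m : ℕ, Fin (m + 1) → S

/-- The mass of a path: the product of the transition probabilities along it. -/
def pathMass {S : Type} (P : S → S → ℝ) (π : MCPath S) : ℝ :=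
  ∏ i : Fin π.1, P (π.2 i.castSucc) (π.2 i.succ)

/-- A hitting path from `s` to `T`: it starts in `s`, ends in `T`, and no proper prefix
visits `T`. -/
def IsHitting {S : Type} (T : Set S) (s : S) (π : MCPath S) : Prop :=
  π.2 0 = s ∧ π.2 (Fin.last π.1) ∈ T ∧ ∀ i : Fin π.1, π.2 i.castSucc ∉ T

/-- The reachability probability `Pr_{P,s}(◇T)`: the sum of the masses of all hitting
paths from `s` to `T`. -/
noncomputable def reachProb {S : Type} (P : S → S → ℝ) (T : Set S) (s : S) : ℝ :=
  ∑' π : {π : MCPath S // IsHitting T s π}, pathMass P π.1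

/-- An entry of a simple pMC: a nonnegative rational constant, a variable `x`, or `1 - x`. -/
def SimpleEntry {X : Type} (p : MvPolynomial X ℚ) : Prop :=
  (∃ q : ℚ, 0 ≤ q ∧ p = MvPolynomial.C q) ∨
  (∃ x : X, p = MvPolynomial.X x) ∨
  (∃ x : X, p = 1 - MvPolynomial.X x)

/-- A simple parametric Markov chain over parameter set `X` with `n` states:
all transition polynomials are simple entries and every row sums to `1` as a polynomial. -/
structure SimplePMC (X : Type) (n : ℕ) where
  init : Fin n
  P : Fin n → Fin n → MvPolynomial X ℚ
  simple : ∀ s s', SimpleEntry (P s s')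
  rowSum : ∀ s, ∑ s', P s s' = 1

/-- A valuation is well-defined if every parameter value lies in `[0,1]`. -/
def WDVal {X : Type} (val : X → ℝ) : Prop := ∀ x, val x ∈ Set.Icc (0 : ℝ) 1

/-- A valuation is graph-preserving if every parameter value lies in `(0,1)`. -/
def GPVal {X : Type} (val : X → ℝ) : Prop := ∀ x, val x ∈ Set.Ioo (0 : ℝ) 1

/-- The transition matrix of the instantiation `D[val]`. -/
noncomputable def instP {X : Type} {n : ℕ} (D : SimplePMC X n) (val : X → ℝ) :
    Fin n → Fin n → ℝ :=
  fun s s' => MvPolynomial.aeval val (D.P s s')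

/-- The only cycles of the pMC are self-loops at absorbing states. -/
def OnlySelfLoopCycles {X : Type} {n : ℕ} (D : SimplePMC X n) : Prop :=
  ∀ (l : ℕ) (c : Fin (l + 1) → Fin n), 0 < l →
    (∀ i : Fin l, D.P (c i.castSucc) (c i.succ) ≠ 0) → c (Fin.last l) = c 0 →
    (∀ i, c i = c 0) ∧ D.P (c 0) (c 0) = 1

/-!
For `f = ∑_d c_d x^d`, let `A = ∑_d |c_d|`, `F = ∑_d c_d` and `S = 2A + 1`. The pMC leaves its
initial state for the target with probability `(A + 1 + F) / 2S`, for a sink with probability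
`(A + 1 - F) / 2S`, and for a gadget of the monomial `x^d` with probability `|c_d| / S`.
The gadget tests the variables of `x^d` one after another, passing the test of `x` with
probability `val x` and failing otherwise, so it passes all of them with probability `val^d`;
passing leads to the target if `c_d > 0`, failing leads to it if `c_d < 0`. So the gadget reaches
the target with probability `p = val^d` or `p = 1 - val^d`, and in both cases
`|c_d| · p = c_d · val^d + (|c_d| - c_d) / 2`; summing up, `Pr(◇T) = 1/2 + f(val) / S`.

Every transition other than the self-loops at the absorbing states strictly increases the rank
`0` (initial state) `< j + 1` (`j`-th state of a gadget) `< ⊤` (absorbing states), so there are no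
other cycles.
-/

open scoped ENNReal

section Hitting

variable {S : Type} {T : Set S} {s : S}

def MCPath.cons (s : S) (π : MCPath S) : MCPath S := ⟨π.1 + 1, Fin.cons s π.2⟩

def MCPath.tail : MCPath S → MCPath S
  | ⟨0, g⟩ => ⟨0, g⟩
  | ⟨m + 1, g⟩ => ⟨m, Fin.tail g⟩

theorem IsHitting.length_eq_zero (hs : s ∈ T) {π : MCPath S} (h : IsHitting T s π) :
    π.1 = 0 := by
  obtain ⟨_ | m, g⟩ := π
  · rfl
  · exact absurd (h.1 ▸ hs) (h.2.2 0)

theorem isHitting_iff_eq_of_mem (hs : s ∈ T) {π : MCPath S} :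
    IsHitting T s π ↔ π = ⟨0, fun _ => s⟩ := by
  refine ⟨fun h => ?_, fun h => h ▸ ⟨rfl, hs, fun i => i.elim0⟩⟩
  obtain ⟨m, g⟩ := π
  obtain rfl : m = 0 := h.length_eq_zero hs
  exact congrArg _ (funext fun i => Fin.fin_one_eq_zero i ▸ h.1)

theorem MCPath.cons_tail {π : MCPath S} (hπ : π.1 ≠ 0) (h0 : π.2 0 = s) :
    π.tail.cons s = π := by
  obtain ⟨_ | m, g⟩ := π
  · exact absurd rfl hπ
  · subst h0
    exact congrArg _ (Fin.cons_self_tail g)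

theorem IsHitting.cons (hs : s ∉ T) {s' : S} {π : MCPath S} (h : IsHitting T s' π) :
    IsHitting T s (π.cons s) := by
  refine ⟨rfl, h.2.1, fun i => ?_⟩
  induction i using Fin.cases with
  | zero => exact hs
  | succ j => simpa [MCPath.cons, ← Fin.succ_castSucc] using h.2.2 j

theorem IsHitting.tail (hs : s ∉ T) {π : MCPath S} (h : IsHitting T s π) :
    IsHitting T (π.tail.2 0) π.tail := by
  obtain ⟨_ | m, g⟩ := π
  · exact absurd (h.1 ▸ h.2.1) hs
  · exact ⟨rfl, h.2.1, fun i => by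
      show g i.castSucc.succ ∉ T
      rw [Fin.succ_castSucc]
      exact h.2.2 i.succ⟩

def hittingConsEquiv (hs : s ∉ T) :
    (Σ s' : S, {π : MCPath S // IsHitting T s' π}) ≃ {π : MCPath S // IsHitting T s π} where
  toFun a := ⟨a.2.1.cons s, a.2.2.cons hs⟩
  invFun π := ⟨_, π.1.tail, π.2.tail hs⟩
  left_inv := by
    rintro ⟨s', π, h⟩
    obtain rfl := h.1
    rfl
  right_inv := by
    rintro ⟨⟨_ | m, g⟩, h⟩
    · exact absurd (h.1 ▸ h.2.1) hs
    · exact Subtype.ext (MCPath.cons_tail m.succ_ne_zero h.1)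

end Hitting

/- Masses of hitting paths are first summed in `ℝ≥0∞`, where the sums can be split and
rearranged freely; `eReachProb_le_one` then makes the passage to `ℝ` possible. -/

noncomputable section Reachability

variable {S : Type} {T : Set S} {s : S}

def ePathMass (Q : S → S → ℝ≥0∞) (π : MCPath S) : ℝ≥0∞ :=
  ∏ i : Fin π.1, Q (π.2 i.castSucc) (π.2 i.succ)

def eReachProb (Q : S → S → ℝ≥0∞) (T : Set S) (s : S) : ℝ≥0∞ :=
  ∑' π : {π : MCPath S // IsHitting T s π}, ePathMass Q π.1

theorem ePathMass_cons (Q : S → S → ℝ≥0∞) (s : S) (π : MCPath S) :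
    ePathMass Q (π.cons s) = Q s (π.2 0) * ePathMass Q π := by
  rw [ePathMass, ePathMass, MCPath.cons]
  simp only [Fin.prod_univ_succ, Fin.castSucc_zero, Fin.cons_zero, Fin.cons_succ,
    ← Fin.succ_castSucc]

theorem tsum_isHitting_of_mem {α : Type*} [AddCommMonoid α] [TopologicalSpace α] (hs : s ∈ T)
    (g : MCPath S → α) :
    ∑' π : {π : MCPath S // IsHitting T s π}, g π = g ⟨0, fun _ => s⟩ :=
  (tsum_eq_single ⟨_, (isHitting_iff_eq_of_mem hs).2 rfl⟩ fun π hπ =>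
    absurd (Subtype.ext ((isHitting_iff_eq_of_mem hs).1 π.2)) hπ).trans rfl

theorem tsum_isHitting_of_notMem [Fintype S] (hs : s ∉ T) (g : MCPath S → ℝ≥0∞) :
    ∑' π : {π : MCPath S // IsHitting T s π}, g π =
      ∑ s', ∑' π : {π : MCPath S // IsHitting T s' π}, g (π.1.cons s) := by
  rw [← (hittingConsEquiv hs).tsum_eq, ENNReal.tsum_sigma', tsum_fintype]
  rfl

theorem eReachProb_of_notMem [Fintype S] (Q : S → S → ℝ≥0∞) (hs : s ∉ T) :
    eReachProb Q T s = ∑ s', Q s s' * eReachProb Q T s' := by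
  rw [eReachProb, tsum_isHitting_of_notMem hs]
  refine Finset.sum_congr rfl fun s' _ => ?_
  rw [eReachProb, ← ENNReal.tsum_mul_left]
  exact tsum_congr fun π => by rw [ePathMass_cons, π.2.1]

theorem eReachProb_le_one [Fintype S] {Q : S → S → ℝ≥0∞} (hQ : ∀ a, ∑ b, Q a b ≤ 1) :
    eReachProb Q T s ≤ 1 := by
  have bounded : ∀ (m : ℕ) (s : S), ∑' π : {π : MCPath S // IsHitting T s π},
      {π : MCPath S | π.1 ≤ m}.indicator (ePathMass Q) π.1 ≤ 1 := by
    intro m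
    induction m with
    | zero =>
      intro s
      by_cases hs : s ∈ T
      · simp [tsum_isHitting_of_mem hs, ePathMass]
      · simp [tsum_isHitting_of_notMem hs, MCPath.cons]
    | succ m ih =>
      intro s
      by_cases hs : s ∈ T
      · simp [tsum_isHitting_of_mem hs, ePathMass]
      rw [tsum_isHitting_of_notMem hs]
      calc _ = ∑ s', Q s s' * ∑' π : {π : MCPath S // IsHitting T s' π},
              {π : MCPath S | π.1 ≤ m}.indicator (ePathMass Q) π.1 := by
            refine Finset.sum_congr rfl fun s' _ => ?_
            rw [← ENNReal.tsum_mul_left]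
            refine tsum_congr fun π => ?_
            rw [Set.indicator_apply, Set.indicator_apply, ePathMass_cons, π.2.1]
            simp [MCPath.cons, mul_ite]
        _ ≤ ∑ s', Q s s' * 1 := by gcongr with s'; exact ih s'
        _ ≤ 1 := by simpa using hQ s
  rw [eReachProb, ENNReal.tsum_eq_iSup_sum]
  refine iSup_le fun F => le_trans ?_ (bounded (F.sup fun π => π.1.1) s)
  refine le_trans (le_of_eq (Finset.sum_congr rfl fun π hπ => ?_)) (ENNReal.sum_le_tsum F)
  exact (Set.indicator_of_mem (s := {π : MCPath S | π.1 ≤ _})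
    (Finset.le_sup (f := fun π => π.1.1) hπ) _).symm

end Reachability

section RealReachability

variable {S : Type} {T : Set S} {s : S} {P : S → S → ℝ}

theorem reachProb_eq_toReal (hP : ∀ a b, 0 ≤ P a b) :
    reachProb P T s = (eReachProb (fun a b => ENNReal.ofReal (P a b)) T s).toReal := by
  rw [eReachProb, ENNReal.tsum_toReal_eq fun _ => by simp [ePathMass, ENNReal.prod_ne_top]]
  exact tsum_congr fun π => by
    simp [pathMass, ePathMass, ENNReal.toReal_prod, ENNReal.toReal_ofReal (hP _ _)]

theorem reachProb_of_mem (hs : s ∈ T) : reachProb P T s = 1 :=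
  (tsum_isHitting_of_mem hs _).trans (by simp [pathMass])

theorem reachProb_of_notMem [Fintype S] (hP : ∀ a b, 0 ≤ P a b)
    (hrow : ∀ a, ∑ b, P a b ≤ 1) (hs : s ∉ T) :
    reachProb P T s = ∑ s', P s s' * reachProb P T s' := by
  set Q : S → S → ℝ≥0∞ := fun a b => ENNReal.ofReal (P a b)
  have hQ : ∀ a, ∑ b, Q a b ≤ 1 := fun a => by
    rw [← ENNReal.ofReal_sum_of_nonneg fun b _ => hP a b]
    exact ENNReal.ofReal_le_one.2 (hrow a)
  have hfin : ∀ s', eReachProb Q T s' ≠ ⊤ := fun _ =>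
    ((eReachProb_le_one hQ).trans_lt ENNReal.one_lt_top).ne
  simp only [reachProb_eq_toReal hP]
  rw [eReachProb_of_notMem Q hs,
    ENNReal.toReal_sum fun s' _ => ENNReal.mul_ne_top ENNReal.ofReal_ne_top (hfin s')]
  simp [Q, ENNReal.toReal_mul, ENNReal.toReal_ofReal (hP _ _)]

theorem exists_castSucc_eq_and_succ_ne {m : ℕ} {g : Fin (m + 1) → S}
    (h : g (Fin.last m) ≠ g 0) :
    ∃ i : Fin m, g i.castSucc = g 0 ∧ g i.succ ≠ g 0 := by
  by_contra! hstay
  exact h (Fin.induction (motive := fun j => g j = g 0) rfl hstay (Fin.last m))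

theorem reachProb_eq_zero_of_absorbing (hs : s ∉ T) (habs : ∀ s' ≠ s, P s s' = 0) :
    reachProb P T s = 0 := by
  refine (tsum_congr fun π => ?_).trans tsum_zero
  obtain ⟨⟨m, g⟩, h⟩ := π
  obtain rfl : g 0 = s := h.1
  obtain ⟨i, hi, hleave⟩ :=
    exists_castSucc_eq_and_succ_ne fun hg : g (Fin.last m) = g 0 => hs (hg ▸ h.2.1)
  exact Finset.prod_eq_zero (Finset.mem_univ i)
    (show P (g i.castSucc) (g i.succ) = 0 by rw [hi]; exact habs _ hleave)

theorem reachProb_comp_equiv {S' : Type} (e : S' ≃ S) (P : S → S → ℝ) (T : Set S) (s : S') :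
    reachProb (fun a b => P (e a) (e b)) (e ⁻¹' T) s = reachProb P T (e s) := by
  let E : MCPath S' ≃ MCPath S := Equiv.sigmaCongrRight fun _ => Equiv.piCongrRight fun _ => e
  have hE : ∀ π, IsHitting (e ⁻¹' T) s π ↔ IsHitting T (e s) (E π) := fun π =>
    and_congr e.apply_eq_iff_eq.symm Iff.rfl
  exact (E.subtypeEquiv hE).tsum_eq fun π => pathMass P π.1

end RealReachability

section PiSingle

theorem sum_single_mul {S R : Type} [Fintype S] [DecidableEq S] [NonUnitalNonAssocSemiring R]
    (a : S) (p : R) (r : S → R) : ∑ s, (Pi.single a p : S → R) s * r s = p * r a := by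
  simp [Pi.single_apply]

theorem map_single {F M N S : Type*} [Zero M] [Zero N] [FunLike F M N] [ZeroHomClass F M N]
    [DecidableEq S] (φ : F) (a : S) (p : M) (s : S) :
    φ ((Pi.single a p : S → M) s) = (Pi.single a (φ p) : S → N) s :=
  Pi.apply_single (fun _ => φ) (fun _ => map_zero φ) a p s

end PiSingle

section SimplePMCFacts

variable {X : Type}

theorem SimpleEntry.aeval_nonneg {p : MvPolynomial X ℚ} (hp : SimpleEntry p) {val : X → ℝ}
    (hval : WDVal val) : 0 ≤ MvPolynomial.aeval val p := by
  rcases hp with ⟨q, hq, rfl⟩ | ⟨x, rfl⟩ | ⟨x, rfl⟩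
  · simpa using hq
  · simpa using (hval x).1
  · simpa using (hval x).2

theorem SimpleEntry.single {S : Type} [DecidableEq S] {a : S} {p : MvPolynomial X ℚ}
    (hp : SimpleEntry p) (s : S) : SimpleEntry ((Pi.single a p : S → MvPolynomial X ℚ) s) := by
  rcases eq_or_ne s a with rfl | hs
  · simpa using hp
  · exact Or.inl ⟨0, le_rfl, by simp [hs]⟩

theorem SimpleEntry.single_add_single {S : Type} [DecidableEq S] {a b : S} (hab : a ≠ b)
    {p q : MvPolynomial X ℚ} (hp : SimpleEntry p) (hq : SimpleEntry q) (s : S) :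
    SimpleEntry ((Pi.single a p + Pi.single b q : S → MvPolynomial X ℚ) s) := by
  rcases eq_or_ne s a with rfl | hs
  · simpa [hab] using hp
  · simpa [hs] using hq.single s

theorem SimpleEntry.C {q : ℚ} (hq : 0 ≤ q) : SimpleEntry (MvPolynomial.C q : MvPolynomial X ℚ) :=
  Or.inl ⟨q, hq, rfl⟩

theorem SimpleEntry.one : SimpleEntry (1 : MvPolynomial X ℚ) := Or.inl ⟨1, zero_le_one, by simp⟩

theorem SimpleEntry.var (x : X) : SimpleEntry (MvPolynomial.X x : MvPolynomial X ℚ) :=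
  Or.inr (Or.inl ⟨x, rfl⟩)

theorem SimpleEntry.one_sub_var (x : X) : SimpleEntry (1 - MvPolynomial.X x : MvPolynomial X ℚ) :=
  Or.inr (Or.inr ⟨x, rfl⟩)

def SimplePMC.ofEquiv {S : Type} [Fintype S] {n : ℕ} (e : S ≃ Fin n) (init : S)
    (R : S → S → MvPolynomial X ℚ) (simple : ∀ s s', SimpleEntry (R s s'))
    (rowSum : ∀ s, ∑ s', R s s' = 1) : SimplePMC X n where
  init := e init
  P i j := R (e.symm i) (e.symm j)
  simple _ _ := simple _ _
  rowSum i := by rw [← rowSum (e.symm i), ← e.symm.sum_comp]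

theorem reachProb_instP_ofEquiv {S : Type} [Fintype S] {n : ℕ} (e : S ≃ Fin n) (init : S)
    (R : S → S → MvPolynomial X ℚ) (simple : ∀ s s', SimpleEntry (R s s'))
    (rowSum : ∀ s, ∑ s', R s s' = 1) (val : X → ℝ) (T : Set S) :
    reachProb (instP (SimplePMC.ofEquiv e init R simple rowSum) val) (e.symm ⁻¹' T)
      (SimplePMC.ofEquiv e init R simple rowSum).init =
      reachProb (fun s s' => MvPolynomial.aeval val (R s s')) T init := by
  have h := reachProb_comp_equiv e.symm (fun s s' => MvPolynomial.aeval val (R s s')) T (e init)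
  rwa [Equiv.symm_apply_apply] at h

theorem eq_of_cycle_of_rank {S α : Type} [Preorder α] (E : S → S → Prop) (rank : S → α)
    (hrank : ∀ s s', E s s' → s' ≠ s → rank s < rank s') {l : ℕ} (c : Fin (l + 1) → S)
    (hc : ∀ i : Fin l, E (c i.castSucc) (c i.succ)) (hcyc : c (Fin.last l) = c 0)
    (i : Fin (l + 1)) :
    c i = c 0 := by
  have mono : Monotone (rank ∘ c) := Fin.monotone_iff_le_succ.2 fun i => by
    by_cases h : c i.succ = c i.castSucc
    · simp [h]
    · exact (hrank _ _ (hc i) h).le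
  have stay : ∀ i : Fin l, c i.succ = c i.castSucc := fun i => by
    by_contra h
    have hlast := mono (Fin.le_last i.succ)
    simp only [Function.comp_apply, hcyc] at hlast
    exact lt_irrefl _
      ((mono (Fin.zero_le i.castSucc)).trans_lt ((hrank _ _ (hc i) h).trans_le hlast))
  exact Fin.induction (motive := fun j => c j = c 0) rfl (fun i ih => (stay i).trans ih) i

theorem onlySelfLoopCycles_of_rank {n : ℕ} {α : Type} [Preorder α] (D : SimplePMC X n)
    (rank : Fin n → α)
    (hrank : ∀ s s', D.P s s' ≠ 0 → rank s < rank s' ∨ s' = s ∧ D.P s s = 1) :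
    OnlySelfLoopCycles D := by
  intro l c hl hc hcyc
  have hconst := eq_of_cycle_of_rank (fun s s' => D.P s s' ≠ 0) rank
    (fun s s' h hne => (hrank s s' h).resolve_right fun h' => hne h'.1) c hc hcyc
  refine ⟨hconst, ?_⟩
  have h0 := hc ⟨0, hl⟩
  rw [hconst (Fin.castSucc (⟨0, hl⟩ : Fin l)), hconst (Fin.succ (⟨0, hl⟩ : Fin l))] at h0
  exact ((hrank _ _ h0).resolve_left (lt_irrefl _)).2

end SimplePMCFacts

noncomputable section

namespace ThresholdReduction

variable {X : Type} (f : MvPolynomial X ℚ)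

def word (d : X →₀ ℕ) : List X := d.toMultiset.toList

def absSum : ℚ := ∑ d ∈ f.support, |f.coeff d|

def scale : ℚ := 2 * absSum f + 1

theorem scale_pos : 0 < scale f := by
  have : 0 ≤ absSum f := Finset.sum_nonneg fun _ _ => abs_nonneg _
  rw [scale]; linarith

/-- `none` is the initial state and `some (.inl b)` an absorbing state, the target iff `b`;
`some (.inr ⟨d, j⟩)` is the state of the gadget of `x^d` that tests the `j`-th variable of
`word d`. -/
abbrev State : Type := Option (Bool ⊕ Σ d : f.support, Fin ((word d.1).length + 1))

abbrev terminal (b : Bool) : State f := some (.inl b)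

abbrev gadget (d : f.support) (j : Fin ((word d.1).length + 1)) : State f := some (.inr ⟨d, j⟩)

def done (d : f.support) : State f := terminal f (decide (0 < f.coeff d))

def fail (d : f.support) : State f := terminal f (decide (f.coeff d < 0))

theorem gadget_ne_terminal (d : f.support) (j : Fin ((word d.1).length + 1)) (b : Bool) :
    gadget f d j ≠ terminal f b := by
  simp [gadget, terminal]

def suffixProd (val : X → ℝ) (d : X →₀ ℕ) (j : ℕ) : ℝ :=
  (((word d).drop j).map val).prod

theorem suffixProd_zero (val : X → ℝ) (d : X →₀ ℕ) :
    suffixProd val d 0 = d.prod fun x k => val x ^ k := by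
  rw [suffixProd, List.drop_zero, word, ← Multiset.prod_coe, ← Multiset.map_coe,
    Multiset.coe_toList, Finsupp.toMultiset_map, Finsupp.prod_toMultiset,
    Finsupp.prod_mapDomain_index (fun _ => pow_zero _) (fun _ _ _ => pow_add _ _ _)]

theorem suffixProd_of_lt (val : X → ℝ) {d : X →₀ ℕ} {j : ℕ} (hj : j < (word d).length) :
    suffixProd val d j = val (word d)[j] * suffixProd val d (j + 1) := by
  rw [suffixProd, List.drop_eq_getElem_cons hj, List.map_cons, List.prod_cons, suffixProd]

theorem aeval_eq_sum_coeff_mul_suffixProd (val : X → ℝ) :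
    MvPolynomial.aeval val f =
      ∑ d ∈ f.support, ((f.coeff d : ℚ) : ℝ) * suffixProd val d 0 := by
  conv_lhs => rw [f.as_sum, map_sum]
  refine Finset.sum_congr rfl fun d _ => ?_
  rw [MvPolynomial.aeval_monomial, suffixProd_zero, eq_ratCast]

variable [DecidableEq X]

def initRow : State f → ℚ :=
  Pi.single (terminal f true) ((absSum f + 1 + ∑ d ∈ f.support, f.coeff d) / (2 * scale f)) +
  Pi.single (terminal f false) ((absSum f + 1 - ∑ d ∈ f.support, f.coeff d) / (2 * scale f)) +
  ∑ d : f.support, Pi.single (gadget f d 0) (|f.coeff d| / scale f)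

def trans : State f → State f → MvPolynomial X ℚ
  | none => fun s' => MvPolynomial.C (initRow f s')
  | some (.inl b) => Pi.single (terminal f b) 1
  | some (.inr ⟨d, j⟩) => Fin.lastCases (motive := fun _ => State f → MvPolynomial X ℚ)
      (Pi.single (done f d) 1)
      (fun i => Pi.single (gadget f d i.succ) (MvPolynomial.X (word d.1)[i]) +
        Pi.single (fail f d) (1 - MvPolynomial.X (word d.1)[i])) j

theorem trans_gadget_last (d : f.support) :
    trans f (gadget f d (Fin.last _)) = Pi.single (done f d) 1 := by
  simp [trans, gadget]

theorem trans_gadget_castSucc (d : f.support) (i : Fin (word d.1).length) :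
    trans f (gadget f d i.castSucc) =
      Pi.single (gadget f d i.succ) (MvPolynomial.X (word d.1)[i]) +
        Pi.single (fail f d) (1 - MvPolynomial.X (word d.1)[i]) := by
  simp [trans, gadget]

theorem initRow_nonneg : 0 ≤ initRow f := by
  have hS := scale_pos f
  have hF : |∑ d ∈ f.support, f.coeff d| ≤ absSum f := Finset.abs_sum_le_sum_abs _ _
  rw [abs_le] at hF
  refine add_nonneg (add_nonneg ?_ ?_) (Finset.sum_nonneg fun d _ => ?_) <;>
    refine Pi.single_nonneg.2 (div_nonneg ?_ (by positivity))
  · linarith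
  · linarith
  · exact abs_nonneg _

theorem sum_initRow : ∑ s, initRow f s = 1 := by
  have hS := (scale_pos f).ne'
  simp only [initRow, Pi.add_apply, Finset.sum_apply, Finset.sum_add_distrib]
  rw [Finset.sum_comm]
  simp only [Finset.sum_pi_single', Finset.mem_univ, if_true]
  rw [← Finset.sum_div, Finset.sum_coe_sort f.support (fun d => |f.coeff d|), ← absSum]
  field_simp
  rw [scale]
  ring

theorem trans_simple (s s' : State f) : SimpleEntry (trans f s s') := by
  rcases s with _ | b | ⟨d, j⟩
  · exact SimpleEntry.C (initRow_nonneg f s')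
  · exact SimpleEntry.one.single s'
  · induction j using Fin.lastCases with
    | last =>
      rw [trans_gadget_last]
      exact SimpleEntry.one.single s'
    | cast i =>
      rw [trans_gadget_castSucc]
      exact SimpleEntry.single_add_single (gadget_ne_terminal f _ _ _) (SimpleEntry.var _)
        (SimpleEntry.one_sub_var _) s'

theorem sum_trans (s : State f) : ∑ s', trans f s s' = 1 := by
  rcases s with _ | b | ⟨d, j⟩
  · rw [trans, ← map_sum, sum_initRow, map_one]
  · simp only [trans, Finset.sum_pi_single', Finset.mem_univ, if_true]
  · induction j using Fin.lastCases with
    | last =>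
      rw [trans_gadget_last]
      simp only [Finset.sum_pi_single', Finset.mem_univ, if_true]
    | cast i =>
      rw [trans_gadget_castSucc]
      simp only [Pi.add_apply, Finset.sum_add_distrib, Finset.sum_pi_single', Finset.mem_univ,
        if_true, add_sub_cancel]

def rank : State f → ℕ∞
  | none => 0
  | some (.inl _) => ⊤
  | some (.inr ⟨_, j⟩) => (j : ℕ) + 1

theorem rank_lt_or_selfLoop {s s' : State f} (h : trans f s s' ≠ 0) :
    rank f s < rank f s' ∨ s' = s ∧ trans f s s = 1 := by
  rcases s with _ | b | ⟨d, j⟩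
  · left
    rcases s' with _ | b | ⟨d', j'⟩
    · exact absurd (by simp [trans, initRow, terminal, gadget]) h
    · simp [rank]
    · simp [rank]
  · exact .inr ⟨Pi.support_single_subset h, Pi.single_eq_same _ _⟩
  · left
    induction j using Fin.lastCases with
    | last =>
      rw [trans_gadget_last] at h
      rw [Pi.support_single_subset h]
      simp [rank, done, terminal]
    | cast i =>
      rw [trans_gadget_castSucc] at h
      rcases Function.support_add _ _ h with h | h <;> rw [Pi.support_single_subset h]
      · simp only [rank, Fin.val_succ, Nat.cast_add, Nat.cast_one, Fin.val_castSucc]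
        exact ENat.lt_add_one_iff (ENat.natCast_ne_top _) |>.2 le_rfl
      · simp [rank, fail, terminal]

def reach (val : X → ℝ) (s : State f) : ℝ :=
  reachProb (fun s s' => MvPolynomial.aeval val (trans f s s')) {terminal f true} s

variable {f} {val : X → ℝ}

theorem reach_eq_sum (hval : WDVal val) {s : State f} (hs : s ≠ terminal f true) :
    reach f val s = ∑ s', MvPolynomial.aeval val (trans f s s') * reach f val s' :=
  reachProb_of_notMem (fun s s' => (trans_simple f s s').aeval_nonneg hval)
    (fun s => by rw [← map_sum, sum_trans, map_one]) hs

theorem reach_terminal (b : Bool) : reach f val (terminal f b) = if b then 1 else 0 := by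
  cases b
  · refine reachProb_eq_zero_of_absorbing (by simp [terminal]) fun s' hs' => ?_
    simp [trans, hs']
  · exact reachProb_of_mem rfl

theorem reach_gadget (hval : WDVal val) (d : f.support) (j : Fin ((word d.1).length + 1)) :
    reach f val (gadget f d j) = suffixProd val d j * reach f val (done f d) +
      (1 - suffixProd val d j) * reach f val (fail f d) := by
  induction j using Fin.reverseInduction with
  | last =>
    rw [reach_eq_sum hval (gadget_ne_terminal f _ _ _), trans_gadget_last]
    simp only [map_single, sum_single_mul, map_one, Fin.val_last, suffixProd, List.drop_length,
      List.map_nil, List.prod_nil]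
    ring
  | cast i ih =>
    rw [reach_eq_sum hval (gadget_ne_terminal f _ _ _), trans_gadget_castSucc]
    simp only [Pi.add_apply, map_add, add_mul, Finset.sum_add_distrib, map_single, sum_single_mul,
      ih, map_sub, map_one, MvPolynomial.aeval_X, Fin.val_castSucc, Fin.val_succ, Fin.getElem_fin]
    rw [suffixProd_of_lt val i.2]
    ring

theorem abs_coeff_mul_reach_gadget_zero (hval : WDVal val) (d : f.support) :
    |((f.coeff d : ℚ) : ℝ)| * reach f val (gadget f d 0) =
      f.coeff d * suffixProd val d 0 + (|((f.coeff d : ℚ) : ℝ)| - f.coeff d) / 2 := by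
  rw [reach_gadget hval, done, fail, reach_terminal, reach_terminal, Fin.val_zero]
  rcases (MvPolynomial.mem_support_iff.1 d.2).lt_or_gt with h | h
  · have hc : ((f.coeff d : ℚ) : ℝ) < 0 := by exact_mod_cast h
    simp [h, h.not_gt, abs_of_neg hc]
    ring
  · have hc : 0 < ((f.coeff d : ℚ) : ℝ) := by exact_mod_cast h
    simp [h, h.not_gt, abs_of_pos hc]

theorem sum_mul_reach_gadget_zero (hval : WDVal val) :
    ∑ d : f.support, ((|f.coeff d| / scale f : ℚ) : ℝ) * reach f val (gadget f d 0) =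
      (MvPolynomial.aeval val f + (absSum f - ∑ d ∈ f.support, f.coeff d : ℚ) / 2) /
        scale f := by
  calc _ = ∑ d ∈ f.support, (f.coeff d * suffixProd val d 0 +
        (|((f.coeff d : ℚ) : ℝ)| - f.coeff d) / 2) / scale f := by
        rw [← Finset.sum_coe_sort f.support]
        refine Finset.sum_congr rfl fun d _ => ?_
        rw [← abs_coeff_mul_reach_gadget_zero hval, Rat.cast_div, Rat.cast_abs]
        ring
    _ = _ := by
        rw [← Finset.sum_div, Finset.sum_add_distrib, ← Finset.sum_div, Finset.sum_sub_distrib,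
          aeval_eq_sum_coeff_mul_suffixProd, absSum]
        push_cast
        rfl

theorem reach_none (hval : WDVal val) :
    reach f val none = 1 / 2 + MvPolynomial.aeval val f / scale f := by
  rw [reach_eq_sum hval (by simp [terminal])]
  simp only [trans, MvPolynomial.aeval_C, initRow, Pi.add_apply, Finset.sum_apply, map_add,
    map_sum, map_single, add_mul, Finset.sum_mul, Finset.sum_add_distrib, sum_single_mul]
  rw [Finset.sum_comm]
  simp only [sum_single_mul, reach_terminal, if_true, Bool.false_eq_true, if_false, mul_one,
    mul_zero, add_zero, eq_ratCast]
  rw [sum_mul_reach_gadget_zero hval]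
  have hS : (scale f : ℝ) ≠ 0 := by exact_mod_cast (scale_pos f).ne'
  push_cast
  field_simp
  push_cast [scale]
  ring

end ThresholdReduction

end

theorem exists_pmc_threshold_iff_nonpos_general {X : Type} (f : MvPolynomial X ℚ) :
    ∃ (n : ℕ) (D : SimplePMC X n) (T : Set (Fin n)),
      OnlySelfLoopCycles D ∧
      ∀ val : X → ℝ, WDVal val →
        (reachProb (instP D val) T D.init ≤ 1 / 2 ↔ MvPolynomial.aeval val f ≤ 0) := by
  classical
  let e := Fintype.equivFin (ThresholdReduction.State f)
  let D := SimplePMC.ofEquiv e none (ThresholdReduction.trans f)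
    (ThresholdReduction.trans_simple f) (ThresholdReduction.sum_trans f)
  refine ⟨_, D, e.symm ⁻¹' {ThresholdReduction.terminal f true},
    onlySelfLoopCycles_of_rank D (ThresholdReduction.rank f ∘ e.symm) fun i j h => ?_,
    fun val hval => ?_⟩
  · have h' := ThresholdReduction.rank_lt_or_selfLoop f h
    rwa [e.symm.injective.eq_iff] at h'
  · rw [reachProb_instP_ofEquiv]
    change ThresholdReduction.reach f val none ≤ 1 / 2 ↔ _
    rw [ThresholdReduction.reach_none hval, add_le_iff_nonpos_right,
      div_le_iff₀ (by exact_mod_cast ThresholdReduction.scale_pos f), zero_mul]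

/-- Reduction underlying Theorem 5 of the paper: for every `f ∈ ℚ[X]` there is a simple pMC
`D` (whose only cycles are self-loops at absorbing states) with target set `T` such that for
every well-defined valuation `val : X → [0,1]`:
`Pr_{D[val]}(◇T) ≤ 1/2` iff `f(val) ≤ 0`. -/
theorem exists_pmc_threshold_iff_nonpos {X : Type} [Fintype X] (f : MvPolynomial X ℚ) :
    ∃ (n : ℕ) (D : SimplePMC X n) (T : Set (Fin n)),
      OnlySelfLoopCycles D ∧
      ∀ val : X → ℝ, WDVal val →
        (reachProb (instP D val) T D.init ≤ 1 / 2 ↔ MvPolynomial.aeval val f ≤ 0) :=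
  exists_pmc_threshold_iff_nonpos_general f
end

section
/- For every simple pMC D over a finite parameter set X and every target set T: there exists a well-defined valuation val : X → [0,1] with Pr_{D[val]}(◇T) > 1/2 if and only if there exists a graph-preserving valuation val : X → (0,1) with Pr_{D[val]}(◇T) > 1/2. -/
/-
The reachability probability is the sum of the nonnegative masses of the hitting paths, hence the
supremum of its finite partial sums; each partial sum is a polynomial, so continuous, function of
the transition matrix. Reachability is therefore lower semicontinuous on stochastic matrices, and
moving a well-defined valuation slightly towards `1/2` yields graph-preserving valuations whose
instantiations converge to the original one, so a strict lower bound survives.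

Summability is a prefix argument: the mass of a path of length `m ≤ N` is the total mass of its
extensions to length `N`, hitting paths are prefix-free, and the paths of length `N` from a fixed
state have total mass `1`.
-/

open Filter Topology Matrix

namespace MCPath

variable {S : Type}

def IsPrefix (p q : MCPath S) : Prop :=
  ∃ h : p.1 ≤ q.1, ∀ i : Fin (p.1 + 1), p.2 i = q.2 (Fin.castLE (Nat.succ_le_succ h) i)

lemma IsPrefix.trans {p q r : MCPath S} (hpq : IsPrefix p q) (hqr : IsPrefix q r) :
    IsPrefix p r :=
  ⟨hpq.1.trans hqr.1, fun i => (hpq.2 i).trans (hqr.2 _)⟩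

lemma isPrefix_of_isPrefix_length_le {p q r : MCPath S} (hpr : IsPrefix p r)
    (hqr : IsPrefix q r) (hpq : p.1 ≤ q.1) : IsPrefix p q :=
  ⟨hpq, fun i => (hpr.2 i).trans (hqr.2 (Fin.castLE (Nat.succ_le_succ hpq) i)).symm⟩

lemma IsPrefix.eq_of_length_le {p q : MCPath S} (hpq : IsPrefix p q) (hqp : q.1 ≤ p.1) :
    p = q := by
  obtain ⟨m, p⟩ := p
  obtain ⟨m', q⟩ := q
  obtain rfl : m = m' := le_antisymm hpq.1 hqp
  congr
  funext i
  exact hpq.2 i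

lemma isPrefix_self_iff {m : ℕ} (p q : Fin (m + 1) → S) : IsPrefix ⟨m, p⟩ ⟨m, q⟩ ↔ q = p :=
  ⟨fun h => by simpa using (h.eq_of_length_le le_rfl).symm, fun h => h ▸ ⟨le_rfl, fun _ => rfl⟩⟩

lemma isPrefix_init_iff {p : MCPath S} {N : ℕ} (hp : p.1 ≤ N) (h : Fin (N + 2) → S) :
    IsPrefix p ⟨N + 1, h⟩ ↔ IsPrefix p ⟨N, Fin.init h⟩ :=
  ⟨fun hpre => ⟨hp, hpre.2⟩, fun hpre => ⟨hp.trans N.le_succ, hpre.2⟩⟩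

end MCPath

open MCPath

section Reachability

variable {S : Type}

lemma IsHitting.eq_of_isPrefix {T : Set S} {s s' : S} {π π' ρ : MCPath S}
    (hπ : IsHitting T s π) (hπ' : IsHitting T s' π') (hπρ : IsPrefix π ρ)
    (hπ'ρ : IsPrefix π' ρ) : π = π' := by
  wlog hle : π.1 ≤ π'.1 generalizing π π' s s'
  · exact (this hπ' hπ hπ'ρ hπρ (le_of_not_ge hle)).symm
  have hpre := isPrefix_of_isPrefix_length_le hπρ hπ'ρ hle
  refine hpre.eq_of_length_le (not_lt.1 fun hlt => hπ'.2.2 ⟨π.1, hlt⟩ ?_)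
  rw [show (⟨π.1, hlt⟩ : Fin π'.1).castSucc = Fin.castLE (by omega) (Fin.last π.1) from rfl,
    ← hpre.2]
  exact hπ.2.1

lemma pathMass_nonneg {P : S → S → ℝ} (hP : ∀ s s', 0 ≤ P s s') (π : MCPath S) :
    0 ≤ pathMass P π :=
  Finset.prod_nonneg fun _ _ => hP _ _

lemma pathMass_succ (P : S → S → ℝ) {N : ℕ} (h : Fin (N + 2) → S) :
    pathMass P ⟨N + 1, h⟩ =
      pathMass P ⟨N, Fin.init h⟩ * P (h (Fin.last N).castSucc) (h (Fin.last (N + 1))) :=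
  Fin.prod_univ_castSucc _

variable [Fintype S]

lemma sum_comp_init_mul_eq_sum {P : S → S → ℝ} (hP : ∀ s, ∑ s', P s s' = 1) {N : ℕ}
    (f : (Fin (N + 1) → S) → ℝ) :
    ∑ h : Fin (N + 2) → S, f (Fin.init h) * P (h (Fin.last N).castSucc) (h (Fin.last (N + 1)))
      = ∑ g, f g := by
  rw [← (Fin.snocEquiv fun _ => S).sum_comp, Fintype.sum_prod_type_right]
  refine Finset.sum_congr rfl fun g _ => ?_
  simp [Fin.snocEquiv, Fin.init_snoc, ← Finset.mul_sum, hP]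

open Classical in
lemma sum_pathMass_extensions {P : S → S → ℝ} (hP : ∀ s, ∑ s', P s s' = 1) (p : MCPath S)
    {N : ℕ} (hN : p.1 ≤ N) :
    ∑ h : Fin (N + 1) → S, (if IsPrefix p ⟨N, h⟩ then pathMass P ⟨N, h⟩ else 0) =
      pathMass P p := by
  obtain ⟨m, p⟩ := p
  induction N, hN using Nat.le_induction with
  | base => simp only [isPrefix_self_iff, Finset.sum_ite_eq', Finset.mem_univ, if_true]
  | succ N hN ih =>
    rw [← ih, ← sum_comp_init_mul_eq_sum hP (N := N)]
    refine Finset.sum_congr rfl fun h _ => ?_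
    rw [isPrefix_init_iff hN, pathMass_succ, ite_mul, zero_mul]

open Classical Finset in
lemma sum_pathMass_hitting_le_one {P : S → S → ℝ} (hP : ∀ s s', 0 ≤ P s s')
    (hrow : ∀ s, ∑ s', P s s' = 1) {T : Set S} {s : S}
    (u : Finset {π : MCPath S // IsHitting T s π}) : ∑ π ∈ u, pathMass P π.1 ≤ 1 := by
  set N := u.sup fun π => π.1.1
  have hN : ∀ π ∈ u, π.1.1 ≤ N := fun π hπ => le_sup (f := fun π => π.1.1) hπ
  let start : MCPath S := ⟨0, fun _ => s⟩
  have hstart (π : {π : MCPath S // IsHitting T s π}) : IsPrefix start π.1 :=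
    ⟨Nat.zero_le _, fun i => by obtain rfl := Fin.fin_one_eq_zero i; exact π.2.1.symm⟩
  have hcard (h : Fin (N + 1) → S) :
      (#{π ∈ u | IsPrefix π.1 ⟨N, h⟩} : ℝ) ≤ if IsPrefix start ⟨N, h⟩ then 1 else 0 := by
    split_ifs with hs
    · exact_mod_cast card_le_one.2 fun π hπ π' hπ' => Subtype.ext <|
        IsHitting.eq_of_isPrefix π.2 π'.2 (mem_filter.1 hπ).2 (mem_filter.1 hπ').2
    · rw [filter_eq_empty_iff.2 fun π _ hπ => hs ((hstart π).trans hπ), card_empty,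
        Nat.cast_zero]
  calc ∑ π ∈ u, pathMass P π.1
      = ∑ π ∈ u, ∑ h : Fin (N + 1) → S,
          if IsPrefix π.1 ⟨N, h⟩ then pathMass P ⟨N, h⟩ else 0 :=
        sum_congr rfl fun π hπ => (sum_pathMass_extensions hrow π.1 (hN π hπ)).symm
    _ = ∑ h : Fin (N + 1) → S, #{π ∈ u | IsPrefix π.1 ⟨N, h⟩} * pathMass P ⟨N, h⟩ := by
        rw [sum_comm]
        refine sum_congr rfl fun h _ => ?_
        rw [← sum_filter, sum_const, nsmul_eq_mul]
    _ ≤ ∑ h : Fin (N + 1) → S, if IsPrefix start ⟨N, h⟩ then pathMass P ⟨N, h⟩ else 0 := by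
        refine sum_le_sum fun h _ => ?_
        refine (mul_le_mul_of_nonneg_right (hcard h) (pathMass_nonneg hP _)).trans_eq ?_
        rw [ite_mul, one_mul, zero_mul]
    _ = 1 := sum_pathMass_extensions hrow start (Nat.zero_le N)

lemma summable_pathMass_hitting {P : S → S → ℝ} (hP : ∀ s s', 0 ≤ P s s')
    (hrow : ∀ s, ∑ s', P s s' = 1) (T : Set S) (s : S) :
    Summable fun π : {π : MCPath S // IsHitting T s π} => pathMass P π.1 :=
  summable_of_sum_le (fun π => pathMass_nonneg hP π.1) (sum_pathMass_hitting_le_one hP hrow)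

lemma lowerSemicontinuousOn_reachProb [DecidableEq S] (T : Set S) (s : S) :
    LowerSemicontinuousOn (fun P : Matrix S S ℝ => reachProb P T s) (rowStochastic ℝ S) := by
  have hsummable {P : Matrix S S ℝ} (hP : P ∈ rowStochastic ℝ S) :
      Summable fun π : {π : MCPath S // IsHitting T s π} => pathMass P π.1 :=
    summable_pathMass_hitting (mem_rowStochastic_iff_sum.1 hP).1
      (mem_rowStochastic_iff_sum.1 hP).2 T s
  intro P hP c hc
  obtain ⟨u, hu⟩ := ((hsummable hP).hasSum.eventually (lt_mem_nhds hc)).exists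
  have hcont : Continuous fun Q : Matrix S S ℝ => ∑ π ∈ u, pathMass Q π.1 := by
    unfold pathMass
    fun_prop
  filter_upwards [nhdsWithin_le_nhds (hcont.continuousAt.eventually (lt_mem_nhds hu)),
    self_mem_nhdsWithin] with Q hQu hQ
  exact hQu.trans_le ((hsummable hQ).sum_le_tsum u fun π _ =>
    pathMass_nonneg (fun _ _ => nonneg_of_mem_rowStochastic hQ) π.1)

end Reachability

section SimplePMC

variable {X : Type} {n : ℕ}

lemma GPVal.wdVal {val : X → ℝ} (hval : GPVal val) : WDVal val :=
  fun x => Set.Ioo_subset_Icc_self (hval x)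

lemma WDVal.gpVal_mix_half {val : X → ℝ} (hval : WDVal val) {t : ℝ} (ht : t ∈ Set.Ioo 0 1) :
    GPVal fun x => (1 - t) * val x + t / 2 := by
  intro x
  obtain ⟨h0, h1⟩ := hval x
  obtain ⟨ht0, ht1⟩ := ht
  constructor <;> nlinarith

lemma instP_mem_rowStochastic (D : SimplePMC X n) {val : X → ℝ} (hval : WDVal val) :
    instP D val ∈ rowStochastic ℝ (Fin n) := by
  refine mem_rowStochastic_iff_sum.2 ⟨fun s s' => ?_, fun s => ?_⟩
  · rcases D.simple s s' with ⟨q, hq, hp⟩ | ⟨x, hp⟩ | ⟨x, hp⟩ <;>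
      simp only [instP, hp, MvPolynomial.aeval_C, MvPolynomial.aeval_X, map_sub, map_one]
    · exact (Rat.cast_nonneg.2 hq).trans_eq (eq_ratCast _ q).symm
    · exact (hval x).1
    · exact sub_nonneg.2 (hval x).2
  · simp only [instP, ← map_sum, D.rowSum, map_one]

lemma continuous_instP (D : SimplePMC X n) :
    Continuous fun val : X → ℝ => (instP D val : Matrix (Fin n) (Fin n) ℝ) := by
  refine continuous_pi fun s => continuous_pi fun s' => ?_
  simp_rw [instP, MvPolynomial.aeval_def, MvPolynomial.eval₂_eq_eval_map]
  exact MvPolynomial.continuous_eval _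

end SimplePMC

theorem exists_wd_gt_half_iff_exists_gp_gt_half_general {X : Type} {n : ℕ}
    (D : SimplePMC X n) (T : Set (Fin n)) :
    (∃ val : X → ℝ, WDVal val ∧ reachProb (instP D val) T D.init > 1 / 2) ↔
    (∃ val : X → ℝ, GPVal val ∧ reachProb (instP D val) T D.init > 1 / 2) := by
  refine ⟨fun ⟨val, hwd, hgt⟩ => ?_, fun ⟨val, hgp, hgt⟩ => ⟨val, hgp.wdVal, hgt⟩⟩
  let mix (t : ℝ) (x : X) : ℝ := (1 - t) * val x + t / 2
  have hmix : Tendsto (fun t => instP D (mix t)) (𝓝[>] 0)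
      (𝓝[(rowStochastic ℝ (Fin n) : Set (Matrix (Fin n) (Fin n) ℝ))] instP D val) := by
    refine tendsto_nhdsWithin_iff.2 ⟨?_, ?_⟩
    · have hcont : Continuous fun t => instP D (mix t) := (continuous_instP D).comp (by fun_prop)
      exact (hcont.tendsto' 0 _ (by simp [mix])).mono_left nhdsWithin_le_nhds
    · filter_upwards [Ioo_mem_nhdsGT one_pos] with t ht
      exact instP_mem_rowStochastic D (hwd.gpVal_mix_half ht).wdVal
  obtain ⟨t, hgt', ht⟩ := ((hmix.eventually <| lowerSemicontinuousOn_reachProb T D.init _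
    (instP_mem_rowStochastic D hwd) _ hgt).and (Ioo_mem_nhdsGT one_pos)).exists
  exact ⟨mix t, hwd.gpVal_mix_half ht, hgt'⟩

/-- Proposition 10 of the paper: for a simple pMC, some well-defined valuation achieves
reachability probability `> 1/2` iff some graph-preserving valuation does. -/
theorem exists_wd_gt_half_iff_exists_gp_gt_half {X : Type} [Fintype X] {n : ℕ}
    (D : SimplePMC X n) (T : Set (Fin n)) :
    (∃ val : X → ℝ, WDVal val ∧ reachProb (instP D val) T D.init > 1 / 2) ↔
    (∃ val : X → ℝ, GPVal val ∧ reachProb (instP D val) T D.init > 1 / 2) :=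
  exists_wd_gt_half_iff_exists_gp_gt_half_general D T
end
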